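/- Suppose E = ∅ (the constraints consist only of angle cosines). Then along any solution p : [0, ∞) → χ of the gradient flow ṗ(t) = −R_W(p(t))ᵀ e(p(t)), the quantity ‖p(t) − 1_n ⊗ p°‖ is constant in time, where p° is the (constant) centroid; equivalently, the scale p^s(t) = sqrt((1/n) Σ_{i=1}^n ‖p_i(t) − p°‖²) is invariant for all t ≥ 0. -/

import Mathlib

open scoped RealInnerProductSpace

noncomputable section

/-- A point in `ℝ^d`. -/
abbrev Pt (d : ℕ) : Type := EuclideanSpace ℝ (Fin d)

/-- A configuration of `n` points in `ℝ^d`, identified with `ℝ^{dn}` (Euclidean norm). -/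
abbrev Conf (d n : ℕ) : Type := PiLp 2 (fun _ : Fin n => Pt d)

/-- Cosine of the angle at vertex `k` subtended by vertices `i` and `j`. -/
def cosAngle {d n : ℕ} (p : Conf d n) (k i j : Fin n) : ℝ :=
  ⟪p i - p k, p j - p k⟫ / (‖p i - p k‖ * ‖p j - p k‖)

/-- The set `χ` of admissible configurations for the angle set `A`. -/
def Chi {d n : ℕ} (A : Finset (Fin n × Fin n × Fin n)) : Set (Conf d n) :=
  {p | ∀ a ∈ A, p a.2.1 ≠ p a.1 ∧ p a.2.2 ≠ p a.1}

/-- The weak rigidity function `F_W`. -/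
def FW {d n : ℕ} (E : Finset (Fin n × Fin n)) (A : Finset (Fin n × Fin n × Fin n))
    (p : Conf d n) : EuclideanSpace ℝ (↥E ⊕ ↥A) :=
  WithLp.toLp 2 (fun x => Sum.elim (fun e : ↥E => ‖p e.1.1 - p e.1.2‖ ^ 2)
    (fun a : ↥A => cosAngle p a.1.1 a.1.2.1 a.1.2.2) x)

/-- The weak rigidity matrix `R_W(p)`: Jacobian (Fréchet derivative) of `F_W` at `p`. -/
def RW {d n : ℕ} (E : Finset (Fin n × Fin n)) (A : Finset (Fin n × Fin n × Fin n))
    (p : Conf d n) : Conf d n →L[ℝ] EuclideanSpace ℝ (↥E ⊕ ↥A) :=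
  fderiv ℝ (FW E A) p

/-- Rank of the weak rigidity matrix. -/
def rankRW {d n : ℕ} (E : Finset (Fin n × Fin n)) (A : Finset (Fin n × Fin n × Fin n))
    (p : Conf d n) : ℕ :=
  Module.finrank ℝ ↥(LinearMap.range (RW E A p).toLinearMap)

/-- `J` is skew-symmetric. -/
def IsSkewAdj {d : ℕ} (J : Pt d →ₗ[ℝ] Pt d) : Prop :=
  ∀ x y : Pt d, ⟪J x, y⟫ = - ⟪x, J y⟫

/-- Trivial infinitesimal motions (translations and rotations). -/
def trivialMotions {d n : ℕ} (p : Conf d n) : Set (Conf d n) :=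
  {δ | ∃ (v : Pt d) (J : Pt d →ₗ[ℝ] Pt d), IsSkewAdj J ∧ ∀ i, δ i = v + J (p i)}

/-- Trivial infinitesimal motions including scaling. -/
def trivialMotionsScale {d n : ℕ} (p : Conf d n) : Set (Conf d n) :=
  {δ | ∃ (v : Pt d) (J : Pt d →ₗ[ℝ] Pt d) (c : ℝ),
    IsSkewAdj J ∧ ∀ i, δ i = v + J (p i) + c • p i}

/-- Congruence of two configurations. -/
def ConfCongruent {d n : ℕ} (p q : Conf d n) : Prop :=
  ∀ i j, ‖q i - q j‖ = ‖p i - p j‖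

/-- Proportional congruence of two configurations. -/
def PropCongruent {d n : ℕ} (p q : Conf d n) : Prop :=
  ∃ C : ℝ, 0 < C ∧ ∀ i j, ‖q i - q j‖ = C * ‖p i - p j‖

/-- Generalized weak rigidity (case `E ≠ ∅`). -/
def IsGWR {d n : ℕ} (E : Finset (Fin n × Fin n)) (A : Finset (Fin n × Fin n × Fin n))
    (p : Conf d n) : Prop :=
  ∃ U ∈ nhds p, U ⊆ Chi A ∧ ∀ q ∈ U, FW E A q = FW E A p → ConfCongruent p q

/-- Generalized weak rigidity (case `E = ∅`, up to scaling). -/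
def IsGWRScale {d n : ℕ} (E : Finset (Fin n × Fin n)) (A : Finset (Fin n × Fin n × Fin n))
    (p : Conf d n) : Prop :=
  ∃ U ∈ nhds p, U ⊆ Chi A ∧ ∀ q ∈ U, FW E A q = FW E A p → PropCongruent p q

/-- `p` is a regular point of `F_W`: its rank attains the maximum over `χ`. -/
def IsRegularPt {d n : ℕ} (E : Finset (Fin n × Fin n)) (A : Finset (Fin n × Fin n × Fin n))
    (p : Conf d n) : Prop :=
  p ∈ Chi A ∧ ∀ q ∈ (Chi A : Set (Conf d n)), rankRW E A q ≤ rankRW E A p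

/-- The gradient-flow vector field `u(p) = -R_W(p)ᵀ (F_W(p) - c)`. -/
def gradFlowVF {d n : ℕ} (E : Finset (Fin n × Fin n)) (A : Finset (Fin n × Fin n × Fin n))
    (c : EuclideanSpace ℝ (↥E ⊕ ↥A)) (p : Conf d n) : Conf d n :=
  -(ContinuousLinearMap.adjoint (RW E A p)) (FW E A p - c)

set_option synthInstance.maxHeartbeats 400000 in
set_option maxHeartbeats 1000000 in
/-- `p : [0,∞) → χ` is a solution of the gradient flow `ṗ = -R_W(p)ᵀ e(p)`. -/
def IsGradFlowSol {d n : ℕ} (E : Finset (Fin n × Fin n)) (A : Finset (Fin n × Fin n × Fin n))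
    (c : EuclideanSpace ℝ (↥E ⊕ ↥A)) (p : ℝ → Conf d n) : Prop :=
  (∀ t : ℝ, 0 ≤ t → p t ∈ Chi A) ∧
  ∀ t : ℝ, 0 ≤ t → HasDerivAt p (gradFlowVF E A c (p t)) t

/-- Centroid of a configuration. -/
def centroid {d n : ℕ} (x : Conf d n) : Pt d := (n : ℝ)⁻¹ • ∑ i, x i

end
/-- The configuration `1ₙ ⊗ x`, all of whose points are `x`. -/
def constConf (d n : ℕ) (x : Pt d) : Conf d n := WithLp.toLp 2 (fun _ => x)

/-!
Angles are invariant under every homothety `q ↦ 1ₙ ⊗ v + r (q - 1ₙ ⊗ v)`, `r ≠ 0`, so when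
`E = ∅` the radial direction `q - 1ₙ ⊗ v` lies in the kernel of `R_W(q)`. The flow velocity
`-R_W(q)ᵀ e(q)` is therefore orthogonal to it, and `‖p(t) - 1ₙ ⊗ v‖²` has zero derivative for
every fixed centre `v`, in particular for the centroid of `p(0)`.
-/

open InnerProductGeometry Filter Set Topology

theorem norm_sub_eq_of_hasDerivAt_of_inner_eq_zero {F : Type*} [NormedAddCommGroup F]
    [InnerProductSpace ℝ F] {x x' : ℝ → F} {a : F}
    (hx : ∀ t, 0 ≤ t → HasDerivAt x (x' t) t) (horth : ∀ t, 0 ≤ t → ⟪x t - a, x' t⟫ = 0)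
    {t : ℝ} (ht : 0 ≤ t) : ‖x t - a‖ = ‖x 0 - a‖ := by
  have hsq : ∀ s, 0 ≤ s → HasDerivAt (fun u => ‖x u - a‖ ^ 2) 0 s := fun s hs => by
    simpa [horth s hs] using ((hx s hs).sub_const a).norm_sq
  have hconst := constant_of_has_deriv_right_zero (a := 0) (b := t)
    (fun s hs => (hsq s hs.1).continuousAt.continuousWithinAt)
    (fun s hs => (hsq s hs.1).hasDerivWithinAt) t ⟨ht, le_rfl⟩
  exact (pow_left_inj₀ (norm_nonneg _) (norm_nonneg _) two_ne_zero).1 hconst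

theorem fderiv_apply_sub_eq_zero_of_eventually_homothety {E F : Type*} [NormedAddCommGroup E]
    [NormedSpace ℝ E] [NormedAddCommGroup F] [NormedSpace ℝ F] {f : E → F} {a x : E}
    (hf : ∀ᶠ r in 𝓝 (1 : ℝ), f (a + r • (x - a)) = f x) : fderiv ℝ f x (x - a) = 0 := by
  by_cases hdiff : DifferentiableAt ℝ f x
  · have hline : HasDerivAt (fun r : ℝ => a + r • (x - a)) (x - a) 1 := by
      simpa using ((hasDerivAt_id (1 : ℝ)).smul_const (x - a)).const_add a
    have hdiff' : DifferentiableAt ℝ f (a + (1 : ℝ) • (x - a)) := by simpa using hdiff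
    simpa using (hdiff'.hasFDerivAt.comp_hasDerivAt 1 hline).unique
      ((hasDerivAt_const 1 (f x)).congr_of_eventuallyEq hf)
  · simp [fderiv_zero_of_not_differentiableAt hdiff]

variable {d n : ℕ}

theorem cosAngle_eq_cos_angle (p : Conf d n) (k i j : Fin n) :
    cosAngle p k i j = Real.cos (angle (p i - p k) (p j - p k)) :=
  (cos_angle _ _).symm

theorem cosAngle_homothety (p : Conf d n) (v : Pt d) {r : ℝ} (hr : r ≠ 0) (k i j : Fin n) :
    cosAngle (constConf d n v + r • (p - constConf d n v)) k i j = cosAngle p k i j := by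
  have hsub : ∀ i k : Fin n, (constConf d n v + r • (p - constConf d n v)) i
      - (constConf d n v + r • (p - constConf d n v)) k = r • (p i - p k) := fun i k => by
    change (v + r • (p i - v)) - (v + r • (p k - v)) = r • (p i - p k)
    module
  rw [cosAngle_eq_cos_angle, cosAngle_eq_cos_angle, hsub, hsub, angle_smul_smul hr]

theorem FW_homothety {E : Finset (Fin n × Fin n)} (hE : E = ∅)
    (A : Finset (Fin n × Fin n × Fin n)) (p : Conf d n) (v : Pt d) {r : ℝ} (hr : r ≠ 0) :
    FW E A (constConf d n v + r • (p - constConf d n v)) = FW E A p := by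
  subst hE
  ext (⟨_, he⟩ | a)
  · exact absurd he (Finset.notMem_empty _)
  · exact cosAngle_homothety p v hr _ _ _

theorem RW_apply_sub_constConf {E : Finset (Fin n × Fin n)} (hE : E = ∅)
    (A : Finset (Fin n × Fin n × Fin n)) (p : Conf d n) (v : Pt d) :
    RW E A p (p - constConf d n v) = 0 :=
  fderiv_apply_sub_eq_zero_of_eventually_homothety <|
    (eventually_ne_nhds one_ne_zero).mono fun _ hr => FW_homothety hE A p v hr

theorem inner_sub_constConf_gradFlowVF {E : Finset (Fin n × Fin n)} (hE : E = ∅)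
    (A : Finset (Fin n × Fin n × Fin n)) (c : EuclideanSpace ℝ (↥E ⊕ ↥A)) (q : Conf d n)
    (v : Pt d) : ⟪q - constConf d n v, gradFlowVF E A c q⟫ = 0 := by
  rw [gradFlowVF, inner_neg_right, ContinuousLinearMap.adjoint_inner_right,
    RW_apply_sub_constConf hE A q v, inner_zero_left, neg_zero]

theorem stmt14_general {d n : ℕ}
    (E : Finset (Fin n × Fin n)) (A : Finset (Fin n × Fin n × Fin n))
    (hE : E = ∅)
    (c : EuclideanSpace ℝ (↥E ⊕ ↥A)) (p : ℝ → Conf d n)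
    (hsol : IsGradFlowSol E A c p) :
    ∀ t : ℝ, 0 ≤ t →
      ‖p t - constConf d n (centroid (p 0))‖
        = ‖p 0 - constConf d n (centroid (p 0))‖ := fun _ ht =>
  norm_sub_eq_of_hasDerivAt_of_inner_eq_zero hsol.2
    (fun s _ => inner_sub_constConf_gradFlowVF hE A c (p s) _) ht

/-- if `E = ∅`, then along any solution of the gradient flow the quantity
`‖p(t) − 1ₙ ⊗ p°‖` (Euclidean norm on `ℝ^{dn}`) is constant in time, where `p°` is the
(constant) centroid; equivalently, the scale is invariant. -/
theorem stmt14 {d n : ℕ} (hd : d = 2 ∨ d = 3) (hn : 3 ≤ n)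
    (E : Finset (Fin n × Fin n)) (A : Finset (Fin n × Fin n × Fin n))
    (hE : E = ∅)
    (hA : ∀ a ∈ A, a.1 ≠ a.2.1 ∧ a.1 ≠ a.2.2 ∧ a.2.1 ≠ a.2.2)
    (c : EuclideanSpace ℝ (↥E ⊕ ↥A)) (p : ℝ → Conf d n)
    (hsol : IsGradFlowSol E A c p) :
    ∀ t : ℝ, 0 ≤ t →
      ‖p t - constConf d n (centroid (p 0))‖
        = ‖p 0 - constConf d n (centroid (p 0))‖ :=
  stmt14_general E A hE c p hsol
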